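/- Let q ≥ 1, let Σ be a symmetric positive definite q×q real matrix, let 0 < a < q/2 and b > 0, and let x ∈ ℝ^q with x ≠ 0. Then p_eg(x; Σ, a, b) = ∫_{2/b}^∞ [Γ(q/2) / (Γ(q/2 − a) Γ(a))] · ((t − 2/b)^(q/2 − a − 1) · 2^a) / (t^(q/2) · b^a) · (2π)^(−q/2) · det(t⁻¹·Σ)^(−1/2) · exp(−(t/2)·xᵀΣ⁻¹x) dt; that is, the elliptical gamma density is a scale mixture of centered Gaussian densities. -/

import Mathlib

/-!
With `r = xᵀΣ⁻¹x > 0`, the factor `det(t⁻¹Σ)^(-1/2) = t^(q/2) det(Σ)^(-1/2)` cancels the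
`t^(q/2)` of the mixing weight, so the integrand is a constant times
`(t - 2/b)^(q/2 - a - 1) e^(-rt/2)`. After the shift `t ↦ t + 2/b` this is a Gamma integral,
equal to `Γ(q/2 - a) (2/r)^(q/2 - a) e^(-r/b)`, and the powers of `2` and `π` collapse to the
normalisation of `p_eg`.
-/

open Matrix Classical

/-- Principal (symmetric positive semidefinite) square root of a matrix;
junk value `0` if the matrix is not positive semidefinite. -/
noncomputable def matSqrt {q : ℕ} (A : Matrix (Fin q) (Fin q) ℝ) : Matrix (Fin q) (Fin q) ℝ :=
  if h : A.PosSemidef then h.1.eigenvectorUnitary.1 * diagonal (Real.sqrt ∘ h.1.eigenvalues) *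
    (star h.1.eigenvectorUnitary : Matrix (Fin q) (Fin q) ℝ) else 0

/-- Loewner order: `loewnerLE A B` iff `B - A` is positive semidefinite. -/
def loewnerLE {q : ℕ} (A B : Matrix (Fin q) (Fin q) ℝ) : Prop := (B - A).PosSemidef

/-- Largest eigenvalue of a (Hermitian) matrix; junk value `0` otherwise. -/
noncomputable def maxEig {q : ℕ} (A : Matrix (Fin q) (Fin q) ℝ) : ℝ :=
  if h : A.IsHermitian then ⨆ i, h.eigenvalues i else 0

/-- Smallest eigenvalue of a (Hermitian) matrix; junk value `0` otherwise. -/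
noncomputable def minEig {q : ℕ} (A : Matrix (Fin q) (Fin q) ℝ) : ℝ :=
  if h : A.IsHermitian then ⨅ i, h.eigenvalues i else 0

/-- The elliptical gamma density
`p_eg(x; Σ, a, b) = Γ(q/2) / (π^(q/2) Γ(a) b^a det(Σ)^(1/2)) (xᵀΣ⁻¹x)^(a-q/2) exp(-xᵀΣ⁻¹x/b)`. -/
noncomputable def pEG {q : ℕ} (S : Matrix (Fin q) (Fin q) ℝ) (a b : ℝ) (x : Fin q → ℝ) : ℝ :=
  Real.Gamma ((q : ℝ) / 2) /
    (Real.pi ^ ((q : ℝ) / 2) * Real.Gamma a * b ^ a * S.det ^ ((1 : ℝ) / 2)) *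
    (x ⬝ᵥ S⁻¹ *ᵥ x) ^ (a - (q : ℝ) / 2) * Real.exp (-(x ⬝ᵥ S⁻¹ *ᵥ x) / b)

open MeasureTheory Set

theorem integral_Ioi_comp_add_right {E : Type*} [NormedAddCommGroup E] [NormedSpace ℝ E]
    (c : ℝ) (f : ℝ → E) : ∫ t in Ioi 0, f (t + c) = ∫ t in Ioi c, f t := by
  have h := (measurePreserving_add_right volume c).setIntegral_preimage_emb
    (measurableEmbedding_addRight c) f (Ioi c)
  rwa [preimage_add_const_Ioi, sub_self] at h

theorem integral_Ioi_rpow_sub_mul_exp_neg_mul {p r : ℝ} (hp : 0 < p) (hr : 0 < r) (c : ℝ) :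
    ∫ t in Ioi c, (t - c) ^ (p - 1) * Real.exp (-(r * t)) =
      (1 / r) ^ p * Real.Gamma p * Real.exp (-(r * c)) := by
  rw [← integral_Ioi_comp_add_right, ← Real.integral_rpow_mul_exp_neg_mul_Ioi hp hr,
    ← integral_mul_const]
  refine setIntegral_congr_fun measurableSet_Ioi fun t _ => ?_
  rw [add_sub_cancel_right, mul_add, neg_add, Real.exp_add, mul_assoc]

theorem Matrix.det_inv_smul_rpow_neg_half {n : Type*} [Fintype n] [DecidableEq n]
    {S : Matrix n n ℝ} (hS : 0 < S.det) {t : ℝ} (ht : 0 < t) :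
    (t⁻¹ • S).det ^ (-(1 : ℝ) / 2) =
      t ^ ((Fintype.card n : ℝ) / 2) * S.det ^ (-(1 : ℝ) / 2) := by
  rw [Matrix.det_smul, Real.mul_rpow (by positivity) hS.le, ← Real.rpow_natCast,
    Real.inv_rpow ht.le, ← Real.rpow_neg ht.le, ← Real.rpow_mul ht.le]
  congr 2
  ring

theorem Real.rpow_sub_eq_two_rpow_mul_two_pi_rpow {r : ℝ} (hr : 0 < r) (a s : ℝ) :
    r ^ (a - s) = 2 ^ a * (1 / (r / 2)) ^ (s - a) * (2 * Real.pi) ^ (-s) * Real.pi ^ s := by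
  rw [one_div_div, div_rpow zero_le_two hr.le, mul_rpow zero_le_two pi_pos.le,
    rpow_neg zero_le_two, rpow_neg pi_pos.le, rpow_sub two_pos, rpow_sub hr, rpow_sub hr]
  field_simp

theorem pEG_eq_scale_mixture_of_gaussians_general {q : ℕ}
    {S : Matrix (Fin q) (Fin q) ℝ} (hS : S.PosDef)
    {a b : ℝ} (haq : a < (q : ℝ) / 2) (hb : 0 < b)
    (x : Fin q → ℝ) (hx : x ≠ 0) :
    pEG S a b x = ∫ t in Set.Ioi (2 / b),
      Real.Gamma ((q : ℝ) / 2) / (Real.Gamma ((q : ℝ) / 2 - a) * Real.Gamma a) *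
        ((t - 2 / b) ^ ((q : ℝ) / 2 - a - 1) * 2 ^ a) / (t ^ ((q : ℝ) / 2) * b ^ a) *
        ((2 * Real.pi) ^ (-(q : ℝ) / 2) * (Matrix.det (t⁻¹ • S)) ^ (-(1 : ℝ) / 2) *
          Real.exp (-(t / 2) * (x ⬝ᵥ S⁻¹ *ᵥ x))) := by
  rw [pEG]
  have hr : 0 < x ⬝ᵥ S⁻¹ *ᵥ x := by simpa using hS.inv.dotProduct_mulVec_pos hx
  have hp : 0 < (q : ℝ) / 2 - a := sub_pos.mpr haq
  have hdet : 0 < S.det := hS.det_pos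
  set r := x ⬝ᵥ S⁻¹ *ᵥ x
  set K := Real.Gamma ((q : ℝ) / 2) / (Real.Gamma ((q : ℝ) / 2 - a) * Real.Gamma a) *
    2 ^ a / b ^ a * (2 * Real.pi) ^ (-(q : ℝ) / 2) * S.det ^ (-(1 : ℝ) / 2)
  rw [setIntegral_congr_fun measurableSet_Ioi
      (g := fun t => K * ((t - 2 / b) ^ ((q : ℝ) / 2 - a - 1) * Real.exp (-(r / 2 * t)))),
    integral_const_mul, integral_Ioi_rpow_sub_mul_exp_neg_mul hp (half_pos hr),
    Real.rpow_sub_eq_two_rpow_mul_two_pi_rpow hr a, show r / 2 * (2 / b) = r / b by field_simp]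
  · simp only [K, neg_div, Real.rpow_neg hdet.le]
    have hGp := (Real.Gamma_pos_of_pos hp).ne'
    -- otherwise `field_simp` normalises the argument of `Γ` and no longer sees `hGp`
    generalize Real.Gamma ((q : ℝ) / 2 - a) = G at hGp ⊢
    field_simp
  · intro t ht
    have ht : 0 < t := (div_pos two_pos hb).trans ht
    simp only [Matrix.det_inv_smul_rpow_neg_half hdet ht, Fintype.card_fin, K]
    field_simp

/-- For `0 < a < q/2`, the elliptical gamma density is a (continuous) scale mixture of
centered Gaussian densities with covariances `t⁻¹·Σ`, `t ∈ (2/b, ∞)`. -/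
theorem pEG_eq_scale_mixture_of_gaussians {q : ℕ} (hq : 1 ≤ q)
    {S : Matrix (Fin q) (Fin q) ℝ} (hS : S.PosDef)
    {a b : ℝ} (ha : 0 < a) (haq : a < (q : ℝ) / 2) (hb : 0 < b)
    (x : Fin q → ℝ) (hx : x ≠ 0) :
    pEG S a b x = ∫ t in Set.Ioi (2 / b),
      Real.Gamma ((q : ℝ) / 2) / (Real.Gamma ((q : ℝ) / 2 - a) * Real.Gamma a) *
        ((t - 2 / b) ^ ((q : ℝ) / 2 - a - 1) * 2 ^ a) / (t ^ ((q : ℝ) / 2) * b ^ a) *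
        ((2 * Real.pi) ^ (-(q : ℝ) / 2) * (Matrix.det (t⁻¹ • S)) ^ (-(1 : ℝ) / 2) *
          Real.exp (-(t / 2) * (x ⬝ᵥ S⁻¹ *ᵥ x))) :=
  pEG_eq_scale_mixture_of_gaussians_general hS haq hb x hx
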